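/- Let Γ < SL(ℝ^{d+1}) divide the cone C over Ω, acting dually and cocompactly on Ω*, and let τ be a cocycle with equivalence condition (*): s(y) = (ω_C(y)/ω_C(γ^{−1}*y)) s(γ^{−1}*y) + τ(γ)·(y,−1). If s and s' are two τ-equivariant continuous functions on Ω* and s extends continuously to g on ∂Ω*, then s' also extends continuously to the same boundary function g. -/

import Mathlib

open Filter Topology

noncomputable section

/-- `liftV x c = (x, c) ∈ ℝ^{d+1}`. -/
def liftV {d : ℕ} (x : EuclideanSpace ℝ (Fin d)) (c : ℝ) : EuclideanSpace ℝ (Fin (d + 1)) :=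
  WithLp.toLp 2 (fun i : Fin (d + 1) => if h : (i : ℕ) < d then x ⟨i, h⟩ else c)

/-- Projection of `ℝ^{d+1}` to the first `d` coordinates. -/
def projV {d : ℕ} (X : EuclideanSpace ℝ (Fin (d + 1))) : EuclideanSpace ℝ (Fin d) :=
  WithLp.toLp 2 (fun i : Fin d => X ⟨i, by omega⟩)

/-- Last coordinate of a vector of `ℝ^{d+1}`. -/
def lastV {d : ℕ} (X : EuclideanSpace ℝ (Fin (d + 1))) : ℝ := X ⟨d, by omega⟩

/-- The open cone `C = {t(x,1) : x ∈ Ω, t > 0}` over `Ω ⊂ ℝ^d`. -/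
def coneOverV {d : ℕ} (Ω : Set (EuclideanSpace ℝ (Fin d))) :
    Set (EuclideanSpace ℝ (Fin (d + 1))) :=
  {X | ∃ x ∈ Ω, ∃ t : ℝ, 0 < t ∧ X = t • liftV x 1}

/-- The dual convex body `Ω* = {y : x·y < 1 for all x ∈ cl Ω}`. -/
def dualBody {d : ℕ} (Ω : Set (EuclideanSpace ℝ (Fin d))) :
    Set (EuclideanSpace ℝ (Fin d)) :=
  {y | ∀ x ∈ closure Ω, (inner ℝ x y : ℝ) < 1}

/-- The dual (inverse-transpose) action `γ ⋆ Y = γ^{-⊤} Y` of a linear automorphism. -/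
def starAct {d : ℕ} (γ : EuclideanSpace ℝ (Fin (d + 1)) ≃ₗ[ℝ] EuclideanSpace ℝ (Fin (d + 1)))
    (Y : EuclideanSpace ℝ (Fin (d + 1))) : EuclideanSpace ℝ (Fin (d + 1)) :=
  LinearMap.adjoint γ.symm.toLinearMap Y

/-- Dual projective action on the affine chart `Ω*`. -/
def dpact {d : ℕ} (γ : EuclideanSpace ℝ (Fin (d + 1)) ≃ₗ[ℝ] EuclideanSpace ℝ (Fin (d + 1)))
    (y : EuclideanSpace ℝ (Fin d)) : EuclideanSpace ℝ (Fin d) :=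
  (-(lastV (starAct γ (liftV y (-1)))))⁻¹ • projV (starAct γ (liftV y (-1)))

/-- A function `s` on `Ω*` is `τ`-equivariant (condition (*) of the article):
`s(y) = (ω(y)/ω(γ⁻¹*y)) s(γ⁻¹*y) + τ(γ)·(y,−1)`. -/
def TauEquivariant {d : ℕ}
    (Γ : Subgroup (EuclideanSpace ℝ (Fin (d + 1)) ≃ₗ[ℝ] EuclideanSpace ℝ (Fin (d + 1))))
    (Ωs : Set (EuclideanSpace ℝ (Fin d)))
    (ω : EuclideanSpace ℝ (Fin d) → ℝ)
    (τ : (EuclideanSpace ℝ (Fin (d + 1)) ≃ₗ[ℝ] EuclideanSpace ℝ (Fin (d + 1))) →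
      EuclideanSpace ℝ (Fin (d + 1)))
    (s : EuclideanSpace ℝ (Fin d) → ℝ) : Prop :=
  ∀ γ ∈ Γ, ∀ y ∈ Ωs,
    s y = (ω y / ω (dpact γ⁻¹ y)) * s (dpact γ⁻¹ y) + (inner ℝ (τ γ) (liftV y (-1)) : ℝ)

/-!
Subtracting the equivariance relations of `s` and `s'` kills the cocycle term, so the quotient
`(s - s') / ω_C` is `Γ`-invariant. It is continuous, hence bounded on a compact set meeting every
orbit, hence bounded on all of `Ω*`: `|s - s'| ≤ C |ω_C|`. Since `ω_C → 0` at `∂Ω*`, so does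
`s - s'`, and `s'` has the same boundary values as `s`.
-/

theorem tendsto_of_abs_sub_le_mul_abs {α : Type*} {l : Filter α} {f f' w : α → ℝ} {a C : ℝ}
    (hf : Tendsto f l (𝓝 a)) (hw : Tendsto w l (𝓝 0))
    (hle : ∀ᶠ y in l, |f y - f' y| ≤ C * |w y|) : Tendsto f' l (𝓝 a) := by
  have hCw : Tendsto (fun y => C * |w y|) l (𝓝 0) := by
    simpa using hw.abs.const_mul C
  have hdiff : Tendsto (fun y => f y - f' y) l (𝓝 0) :=
    squeeze_zero_norm' (by simpa only [Real.norm_eq_abs] using hle) hCw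
  simpa using hf.sub hdiff

namespace TauEquivariant

variable {d : ℕ}
  {Γ : Subgroup (EuclideanSpace ℝ (Fin (d + 1)) ≃ₗ[ℝ] EuclideanSpace ℝ (Fin (d + 1)))}
  {Ωs : Set (EuclideanSpace ℝ (Fin d))} {ω : EuclideanSpace ℝ (Fin d) → ℝ}
  {τ : (EuclideanSpace ℝ (Fin (d + 1)) ≃ₗ[ℝ] EuclideanSpace ℝ (Fin (d + 1))) →
    EuclideanSpace ℝ (Fin (d + 1))}
  {s s' : EuclideanSpace ℝ (Fin d) → ℝ}

theorem sub_eq_div_mul_sub_dpact (hs : TauEquivariant Γ Ωs ω τ s) (hs' : TauEquivariant Γ Ωs ω τ s')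
    {γ} (hγ : γ ∈ Γ) {y} (hy : y ∈ Ωs) :
    s y - s' y = ω y / ω (dpact γ y) * (s (dpact γ y) - s' (dpact γ y)) := by
  have h := hs γ⁻¹ (inv_mem hγ) y hy
  have h' := hs' γ⁻¹ (inv_mem hγ) y hy
  rw [inv_inv] at h h'
  rw [h, h']
  ring

theorem exists_abs_sub_le_mul_abs (hs : TauEquivariant Γ Ωs ω τ s)
    (hs' : TauEquivariant Γ Ωs ω τ s') (hscont : ContinuousOn s Ωs)
    (hs'cont : ContinuousOn s' Ωs) (hωcont : ContinuousOn ω Ωs) (hω : ∀ y ∈ Ωs, ω y ≠ 0)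
    (hcc : ∃ L, IsCompact L ∧ L ⊆ Ωs ∧ ∀ y ∈ Ωs, ∃ γ ∈ Γ, dpact γ y ∈ L) :
    ∃ C, ∀ y ∈ Ωs, |s y - s' y| ≤ C * |ω y| := by
  obtain ⟨L, hLc, hLΩ, hLcov⟩ := hcc
  have hq : ContinuousOn (fun z => (s z - s' z) / ω z) L :=
    ((hscont.sub hs'cont).div hωcont hω).mono hLΩ
  obtain ⟨C, hC⟩ := hLc.exists_bound_of_continuousOn hq
  refine ⟨C, fun y hy => ?_⟩
  obtain ⟨γ, hγ, hzL⟩ := hLcov y hy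
  have hbound : |(s (dpact γ y) - s' (dpact γ y)) / ω (dpact γ y)| ≤ C := by
    simpa only [Real.norm_eq_abs] using hC _ hzL
  calc |s y - s' y|
      = |(s (dpact γ y) - s' (dpact γ y)) / ω (dpact γ y)| * |ω y| := by
        rw [sub_eq_div_mul_sub_dpact hs hs' hγ hy, abs_mul, abs_div, abs_div]
        ring
    _ ≤ C * |ω y| := mul_le_mul_of_nonneg_right hbound (abs_nonneg _)

end TauEquivariant

theorem tau_equivariant_functions_same_boundary_extension_general {d : ℕ}
    (Ω : Set (EuclideanSpace ℝ (Fin d)))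
    (Γ : Subgroup (EuclideanSpace ℝ (Fin (d + 1)) ≃ₗ[ℝ] EuclideanSpace ℝ (Fin (d + 1))))
    (hcc : ∃ L, IsCompact L ∧ L ⊆ dualBody Ω ∧ ∀ y ∈ dualBody Ω, ∃ γ ∈ Γ, dpact γ y ∈ L)
    -- the affine-sphere support function `ω_C`
    (ω : EuclideanSpace ℝ (Fin d) → ℝ)
    (hωcont : ContinuousOn ω (dualBody Ω))
    (hωneg : ∀ y ∈ dualBody Ω, ω y < 0)
    (hω0 : ∀ y₀ ∈ frontier (dualBody Ω), Tendsto ω (𝓝[dualBody Ω] y₀) (𝓝 0))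
    -- the cocycle
    (τ : (EuclideanSpace ℝ (Fin (d + 1)) ≃ₗ[ℝ] EuclideanSpace ℝ (Fin (d + 1))) →
      EuclideanSpace ℝ (Fin (d + 1)))
    -- the two equivariant functions and the boundary function
    (s s' : EuclideanSpace ℝ (Fin d) → ℝ)
    (hscont : ContinuousOn s (dualBody Ω)) (hs'cont : ContinuousOn s' (dualBody Ω))
    (hseq : TauEquivariant Γ (dualBody Ω) ω τ s)
    (hs'eq : TauEquivariant Γ (dualBody Ω) ω τ s')
    (g : EuclideanSpace ℝ (Fin d) → ℝ)
    (hsg : ∀ y₀ ∈ frontier (dualBody Ω), Tendsto s (𝓝[dualBody Ω] y₀) (𝓝 (g y₀))) :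
    ∀ y₀ ∈ frontier (dualBody Ω), Tendsto s' (𝓝[dualBody Ω] y₀) (𝓝 (g y₀)) := by
  intro y₀ hy₀
  obtain ⟨C, hC⟩ := hseq.exists_abs_sub_le_mul_abs hs'eq hscont hs'cont hωcont
    (fun y hy => (hωneg y hy).ne) hcc
  exact tendsto_of_abs_sub_le_mul_abs (hsg y₀ hy₀) (hω0 y₀ hy₀)
    (eventually_nhdsWithin_of_forall hC)

/-- Let `Γ < SL(ℝ^{d+1})` divide the cone `C` over `Ω`, acting dually and
cocompactly on `Ω*`, and let `τ` be a cocycle. If `s` and `s'` are two `τ`-equivariant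
continuous functions on `Ω*` and `s` extends continuously to `g` on `∂Ω*`, then `s'` also
extends continuously to the same boundary function `g`. -/
theorem tau_equivariant_functions_same_boundary_extension {d : ℕ}
    (Ω : Set (EuclideanSpace ℝ (Fin d)))
    (hΩb : Bornology.IsBounded Ω) (hΩo : IsOpen Ω) (hΩc : Convex ℝ Ω)
    (hΩ0 : (0 : EuclideanSpace ℝ (Fin d)) ∈ Ω)
    (Γ : Subgroup (EuclideanSpace ℝ (Fin (d + 1)) ≃ₗ[ℝ] EuclideanSpace ℝ (Fin (d + 1))))
    (hSL : ∀ γ ∈ Γ, LinearMap.det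
      (γ : EuclideanSpace ℝ (Fin (d + 1)) ≃ₗ[ℝ] EuclideanSpace ℝ (Fin (d + 1))).toLinearMap = 1)
    (hpres : ∀ γ ∈ Γ, (⇑γ) '' coneOverV Ω = coneOverV Ω)
    (hact : ∀ γ ∈ Γ, ∀ y ∈ dualBody Ω, dpact γ y ∈ dualBody Ω)
    (hcc : ∃ L, IsCompact L ∧ L ⊆ dualBody Ω ∧ ∀ y ∈ dualBody Ω, ∃ γ ∈ Γ, dpact γ y ∈ L)
    -- the affine-sphere support function `ω_C`
    (ω : EuclideanSpace ℝ (Fin d) → ℝ)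
    (hωcont : ContinuousOn ω (dualBody Ω)) (hωconv : ConvexOn ℝ (dualBody Ω) ω)
    (hωneg : ∀ y ∈ dualBody Ω, ω y < 0)
    (hω0 : ∀ y₀ ∈ frontier (dualBody Ω), Tendsto ω (𝓝[dualBody Ω] y₀) (𝓝 0))
    -- the cocycle
    (τ : (EuclideanSpace ℝ (Fin (d + 1)) ≃ₗ[ℝ] EuclideanSpace ℝ (Fin (d + 1))) →
      EuclideanSpace ℝ (Fin (d + 1)))
    (hτ : ∀ α ∈ Γ, ∀ β ∈ Γ, τ (α * β) = τ α + α (τ β))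
    -- the two equivariant functions and the boundary function
    (s s' : EuclideanSpace ℝ (Fin d) → ℝ)
    (hscont : ContinuousOn s (dualBody Ω)) (hs'cont : ContinuousOn s' (dualBody Ω))
    (hseq : TauEquivariant Γ (dualBody Ω) ω τ s)
    (hs'eq : TauEquivariant Γ (dualBody Ω) ω τ s')
    (g : EuclideanSpace ℝ (Fin d) → ℝ)
    (hsg : ∀ y₀ ∈ frontier (dualBody Ω), Tendsto s (𝓝[dualBody Ω] y₀) (𝓝 (g y₀))) :
    ∀ y₀ ∈ frontier (dualBody Ω), Tendsto s' (𝓝[dualBody Ω] y₀) (𝓝 (g y₀)) :=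
  tau_equivariant_functions_same_boundary_extension_general Ω Γ hcc ω hωcont hωneg hω0 τ s s' hscont
    hs'cont hseq hs'eq g hsg
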